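/- Let Σ_u be a symmetric positive definite p×p real matrix, Σ_v a symmetric positive definite q×q real matrix, and C an arbitrary real p×q matrix. Then the supremum over all a ∈ ℝ^p and b ∈ ℝ^q of aᵀCb − (1/2)·(aᵀΣ_u a)·(bᵀΣ_v b) equals (1/2)·‖Σ_u^{-1/2} C Σ_v^{-1/2}‖², where Σ^{-1/2} denotes the inverse of the unique symmetric positive definite square root of Σ and ‖·‖ is the operator (spectral) norm. -/

import Mathlib

open Matrix

/-!
Substituting `x = Σ_u^{1/2} a` and `y = Σ_v^{1/2} b`, a bijection since the square roots are
invertible, turns the objective into `⟪x, M y⟫ - ½ ‖x‖² ‖y‖²` with `M = Σ_u^{-1/2} C Σ_v^{-1/2}`.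
By Cauchy–Schwarz and AM–GM this is at most `½ ‖M‖²`. Conversely, for fixed `y ≠ 0` the choice
`x = M y / ‖y‖²` gives the value `½ ‖M y‖² / ‖y‖²`, whose supremum over `y` is `½ ‖M‖²`.
-/

open scoped ComplexOrder in
/-- The positive semidefinite square root of a positive semidefinite matrix
(restored with its Mathlib (Dec 2024) definition, since removed from Mathlib). -/
noncomputable def Matrix.PosSemidef.sqrt {n : Type*} [Fintype n] [DecidableEq n] {𝕜 : Type*}
    [RCLike 𝕜] {A : Matrix n n 𝕜} (hA : A.PosSemidef) : Matrix n n 𝕜 :=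
  hA.1.eigenvectorUnitary.1 * diagonal ((↑) ∘ (fun x : ℝ => √x) ∘ hA.1.eigenvalues) *
    (star hA.1.eigenvectorUnitary : Matrix n n 𝕜)

namespace Matrix.PosSemidef

open scoped ComplexOrder

variable {n 𝕜 : Type*} [Fintype n] [DecidableEq n] [RCLike 𝕜] {A : Matrix n n 𝕜}

theorem isHermitian_sqrt (hA : A.PosSemidef) : hA.sqrt.IsHermitian :=
  isHermitian_mul_mul_conjTranspose _ <| isHermitian_diagonal_of_self_adjoint _ <| by
    ext i; simp

theorem sqrt_mul_self (hA : A.PosSemidef) : hA.sqrt * hA.sqrt = A := by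
  conv_rhs => rw [hA.1.spectral_theorem, Unitary.conjStarAlgAut_apply]
  simp only [sqrt, Matrix.mul_assoc]
  rw [← Matrix.mul_assoc (star _), Unitary.coe_star_mul_self, Matrix.one_mul,
    ← Matrix.mul_assoc (diagonal _), diagonal_mul_diagonal]
  congr 3 with i
  simp [← RCLike.ofReal_mul, Real.mul_self_sqrt (hA.eigenvalues_nonneg i)]

theorem transpose_sqrt {A : Matrix n n ℝ} (hA : A.PosSemidef) : hA.sqrtᵀ = hA.sqrt := by
  rw [← conjTranspose_eq_transpose_of_trivial, hA.isHermitian_sqrt.eq]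

end Matrix.PosSemidef

open scoped ComplexOrder in
theorem Matrix.PosDef.isUnit_sqrt {n 𝕜 : Type*} [Fintype n] [DecidableEq n] [RCLike 𝕜]
    {A : Matrix n n 𝕜} (hA : A.PosDef) : IsUnit hA.posSemidef.sqrt :=
  isUnit_of_mul_isUnit_left (hA.posSemidef.sqrt_mul_self ▸ hA.isUnit)

namespace ContinuousLinearMap

variable {E F : Type*} [NormedAddCommGroup E] [InnerProductSpace ℝ E]
  [NormedAddCommGroup F] [InnerProductSpace ℝ F]

theorem inner_apply_sub_le_half_sq_opNorm (L : E →L[ℝ] F) (x : F) (y : E) :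
    inner ℝ x (L y) - 1 / 2 * ‖x‖ ^ 2 * ‖y‖ ^ 2 ≤ 1 / 2 * ‖L‖ ^ 2 := by
  have h : inner ℝ x (L y) ≤ ‖x‖ * (‖L‖ * ‖y‖) :=
    (real_inner_le_norm x (L y)).trans
      (mul_le_mul_of_nonneg_left (L.le_opNorm y) (norm_nonneg x))
  nlinarith [sq_nonneg (‖L‖ - ‖x‖ * ‖y‖)]

theorem half_sq_opNorm_le_of_forall_inner_apply_sub_le (L : E →L[ℝ] F) {s : ℝ}
    (hs : ∀ x y, inner ℝ x (L y) - 1 / 2 * ‖x‖ ^ 2 * ‖y‖ ^ 2 ≤ s) :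
    1 / 2 * ‖L‖ ^ 2 ≤ s := by
  have hs₀ : 0 ≤ s := by simpa using hs 0 0
  have happly : ∀ y, ‖L y‖ ≤ √(2 * s) * ‖y‖ := by
    intro y
    rcases eq_or_ne y 0 with rfl | hy
    · simp
    have hy' : 0 < ‖y‖ := norm_pos_iff.2 hy
    have hval : inner ℝ ((‖y‖ ^ 2)⁻¹ • L y) (L y) - 1 / 2 * ‖(‖y‖ ^ 2)⁻¹ • L y‖ ^ 2 * ‖y‖ ^ 2
        = ‖L y‖ ^ 2 / (2 * ‖y‖ ^ 2) := by
      rw [real_inner_smul_left, real_inner_self_eq_norm_sq, norm_smul,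
        Real.norm_of_nonneg (by positivity)]
      field_simp
      ring
    have h := hval ▸ hs ((‖y‖ ^ 2)⁻¹ • L y) y
    rw [div_le_iff₀ (by positivity)] at h
    rw [← Real.sqrt_sq (norm_nonneg y), ← Real.sqrt_mul (by positivity)]
    exact Real.le_sqrt_of_sq_le (by linarith)
  have hL : ‖L‖ ≤ √(2 * s) := L.opNorm_le_bound (Real.sqrt_nonneg _) happly
  have := pow_le_pow_left₀ (norm_nonneg L) hL 2
  rw [Real.sq_sqrt (by positivity)] at this
  linarith

theorem iSup_inner_apply_sub_eq_half_sq_opNorm (L : E →L[ℝ] F) :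
    ⨆ (x : F) (y : E), (inner ℝ x (L y) - 1 / 2 * ‖x‖ ^ 2 * ‖y‖ ^ 2) = 1 / 2 * ‖L‖ ^ 2 := by
  have hbdd : ∀ x, BddAbove (Set.range fun y ↦ inner ℝ x (L y) - 1 / 2 * ‖x‖ ^ 2 * ‖y‖ ^ 2) :=
    fun x ↦ ⟨_, Set.forall_mem_range.2 (L.inner_apply_sub_le_half_sq_opNorm x)⟩
  have hsup : ∀ x, ⨆ y, (inner ℝ x (L y) - 1 / 2 * ‖x‖ ^ 2 * ‖y‖ ^ 2) ≤ 1 / 2 * ‖L‖ ^ 2 :=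
    fun x ↦ ciSup_le (L.inner_apply_sub_le_half_sq_opNorm x)
  refine le_antisymm (ciSup_le hsup) <|
    L.half_sq_opNorm_le_of_forall_inner_apply_sub_le fun x y ↦ ?_
  exact (le_ciSup (hbdd x) y).trans (le_ciSup ⟨_, Set.forall_mem_range.2 hsup⟩ x)

end ContinuousLinearMap

theorem Matrix.dotProduct_transpose_mul_mulVec_eq_inner {l m n : Type*} [Fintype l] [Fintype m]
    [Fintype n] (A : Matrix l m ℝ) (B : Matrix l n ℝ) (x : m → ℝ) (y : n → ℝ) :
    x ⬝ᵥ ((Aᵀ * B) *ᵥ y) = inner ℝ (WithLp.toLp 2 (A *ᵥ x)) (WithLp.toLp 2 (B *ᵥ y)) := by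
  rw [EuclideanSpace.inner_toLp_toLp, star_trivial, ← mulVec_mulVec, dotProduct_mulVec,
    vecMul_transpose, dotProduct_comm]

theorem Matrix.iSup_dotProduct_sub_eq_half_sq_opNorm_of_isUnit {m n : Type*} [Fintype m]
    [Fintype n] [DecidableEq m] [DecidableEq n] {R : Matrix m m ℝ} {T : Matrix n n ℝ}
    (hR : IsUnit R) (hT : IsUnit T) (M : Matrix m n ℝ) :
    ⨆ (a : m → ℝ) (b : n → ℝ), (a ⬝ᵥ ((Rᵀ * M * T) *ᵥ b)
      - 1 / 2 * (a ⬝ᵥ ((Rᵀ * R) *ᵥ a)) * (b ⬝ᵥ ((Tᵀ * T) *ᵥ b)))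
      = 1 / 2 * ‖LinearMap.toContinuousLinearMap (toEuclideanLin M)‖ ^ 2 := by
  set L := LinearMap.toContinuousLinearMap (toEuclideanLin M)
  have hobj : ∀ a b, a ⬝ᵥ ((Rᵀ * M * T) *ᵥ b)
      - 1 / 2 * (a ⬝ᵥ ((Rᵀ * R) *ᵥ a)) * (b ⬝ᵥ ((Tᵀ * T) *ᵥ b)) =
      inner ℝ (WithLp.toLp 2 (R *ᵥ a)) (L (WithLp.toLp 2 (T *ᵥ b)))
        - 1 / 2 * ‖WithLp.toLp 2 (R *ᵥ a)‖ ^ 2 * ‖WithLp.toLp 2 (T *ᵥ b)‖ ^ 2 := by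
    intro a b
    rw [Matrix.mul_assoc, dotProduct_transpose_mul_mulVec_eq_inner,
      dotProduct_transpose_mul_mulVec_eq_inner, dotProduct_transpose_mul_mulVec_eq_inner,
      real_inner_self_eq_norm_sq, real_inner_self_eq_norm_sq, ← mulVec_mulVec]
    rfl
  have hRsurj : Function.Surjective fun a ↦ WithLp.toLp 2 (R *ᵥ a) :=
    (WithLp.linearEquiv 2 ℝ _).symm.surjective.comp (mulVec_surjective_iff_isUnit.2 hR)
  have hTsurj : Function.Surjective fun b ↦ WithLp.toLp 2 (T *ᵥ b) :=
    (WithLp.linearEquiv 2 ℝ _).symm.surjective.comp (mulVec_surjective_iff_isUnit.2 hT)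
  simp only [hobj]
  rw [← L.iSup_inner_apply_sub_eq_half_sq_opNorm]
  exact (iSup_congr fun a ↦ hTsurj.iSup_comp _).trans (hRsurj.iSup_comp fun x ↦
    ⨆ y, inner ℝ x (L y) - 1 / 2 * ‖x‖ ^ 2 * ‖y‖ ^ 2)

/-- For symmetric positive definite `Sᵤ` (`p × p`), `Sᵥ` (`q × q`) and an arbitrary
real `p × q` matrix `C`, the supremum over `a ∈ ℝ^p`, `b ∈ ℝ^q` of
`aᵀ C b - (1/2) (aᵀ Sᵤ a) (bᵀ Sᵥ b)` equals `(1/2) ‖Sᵤ^{-1/2} C Sᵥ^{-1/2}‖²`,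
where `S^{-1/2}` is the inverse of the unique symmetric positive definite square
root of `S` and `‖·‖` is the operator (spectral) norm. -/
theorem stmt1 (p q : ℕ) (Su : Matrix (Fin p) (Fin p) ℝ) (Sv : Matrix (Fin q) (Fin q) ℝ)
    (hu : Su.PosDef) (hv : Sv.PosDef) (C : Matrix (Fin p) (Fin q) ℝ) :
    (⨆ (a : Fin p → ℝ) (b : Fin q → ℝ),
      (a ⬝ᵥ (C *ᵥ b) - (1 / 2) * (a ⬝ᵥ (Su *ᵥ a)) * (b ⬝ᵥ (Sv *ᵥ b))))
      = (1 / 2) * ‖LinearMap.toContinuousLinearMap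
          (Matrix.toEuclideanLin ((hu.posSemidef.sqrt)⁻¹ * C * (hv.posSemidef.sqrt)⁻¹))‖ ^ 2 := by
  set R := hu.posSemidef.sqrt
  set T := hv.posSemidef.sqrt
  have hR : IsUnit R := hu.isUnit_sqrt
  have hT : IsUnit T := hv.isUnit_sqrt
  have hC : R * (R⁻¹ * C * T⁻¹) * T = C := by
    simp only [← Matrix.mul_assoc,
      nonsing_inv_mul_cancel_right _ _ ((isUnit_iff_isUnit_det T).1 hT),
      mul_nonsing_inv _ ((isUnit_iff_isUnit_det R).1 hR), Matrix.one_mul]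
  have h := iSup_dotProduct_sub_eq_half_sq_opNorm_of_isUnit hR hT (R⁻¹ * C * T⁻¹)
  rwa [hu.posSemidef.transpose_sqrt, hv.posSemidef.transpose_sqrt, hC,
    hu.posSemidef.sqrt_mul_self, hv.posSemidef.sqrt_mul_self] at h
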